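/- Let H be a real Hilbert space, let V be a closed vector subspace of H with orthogonal projection P_V and orthogonal complement V⊥, let A : H → 2^H be maximally monotone, let B : H → H be monotone and χ-Lipschitzian with zer(A + B + N_V) ≠ ∅, let γ ∈ (0, 1/χ), let ε ∈ (0, 1), and let (λₙ) be a sequence in [ε, 1]. Let z₀ ∈ H and iterate, for every n ∈ ℕ: rₙ = zₙ − γ P_V B P_V zₙ; pₙ = J_{γA} rₙ; sₙ = 2 P_V pₙ − pₙ + rₙ − P_V rₙ; tₙ = sₙ − γ P_V B P_V sₙ; z_{n+1} = zₙ + λₙ(tₙ − rₙ). Then, setting xₙ = P_V zₙ and yₙ = P_{V⊥} zₙ / γ, the sequence (xₙ) converges weakly to some x̄ ∈ zer(A + B + N_V), (yₙ) converges weakly to some ȳ ∈ V⊥ ∩ (Ax̄ + P_V Bx̄), and x_{n+1} − xₙ → 0 and y_{n+1} − yₙ → 0 in norm. -/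

import Mathlib

/-!
Statement 9: Forward–Douglas-Rachford–forward splitting (Corollary): convergence of
`xₙ = P_V zₙ` and `yₙ = P_{V⊥} zₙ / γ` for the iteration built from `J_{γA}` and
forward steps on `P_V B P_V`.  The resolvent `J_{γA}` is encoded as a map `JγA`
satisfying `w - JγA w ∈ γ • A (JγA w)` for all `w`.
-/

open scoped Pointwise RealInnerProductSpace Topology
open Filter

noncomputable section

variable {H : Type*} [NormedAddCommGroup H] [InnerProductSpace ℝ H] [CompleteSpace H]

/-- A set-valued operator is monotone. -/
def MonotoneSV (A : H → Set H) : Prop :=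
  ∀ ⦃x y u v : H⦄, u ∈ A x → v ∈ A y → 0 ≤ ⟪x - y, u - v⟫

/-- A set-valued operator is maximally monotone. -/
def MaxMonotone (A : H → Set H) : Prop :=
  MonotoneSV A ∧ ∀ x u : H, (∀ y v, v ∈ A y → 0 ≤ ⟪x - y, u - v⟫) → u ∈ A x

/-- The normal cone to the closed subspace `V`. -/
def normalConeSub (V : Submodule ℝ H) : H → Set H := fun x =>
  {u | x ∈ V ∧ u ∈ Vᗮ}

/-!
With `P`, `Q` the projections onto `V`, `Vᗮ`, the map `w ↦ P (J_{γA} w) + Q (w - J_{γA} w)` is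
the resolvent of Spingarn's partial inverse `S` of `γA` with respect to `V`, so the iteration is
Tseng's forward–backward–forward method for the monotone `S` and the monotone, `γχ`-Lipschitz
`C = γ P B P`. Tseng's inequality
`‖zₙ₊₁ - p‖² + ε (1 - γ²χ²) ‖zₙ - J_S (zₙ - C zₙ)‖² ≤ ‖zₙ - p‖²` for zeros `p` of `S + C`
makes the residuals, hence the steps, tend to `0`. Along these vanishing residuals every weak
cluster point is a zero of `S + C`, because `S + C` is maximal monotone (`Id + S + C` is onto by
Banach's fixed point theorem), and Opial's argument gives weak convergence of `(zₙ)`. The zeros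
of `S + C` are exactly the points `x + γ y` with `x ∈ V`, `y ∈ Vᗮ` and `y ∈ A x + P B x`, which
turns the result into the statement about `(P zₙ, Q zₙ / γ)`.
-/

section WeakConvergence

variable {E F ι : Type*} [NormedAddCommGroup E] [InnerProductSpace ℝ E]
  [NormedAddCommGroup F] [InnerProductSpace ℝ F]

def WeakTendsto (l : Filter ι) (z : ι → E) (x : E) : Prop :=
  ∀ w, Tendsto (fun i => ⟪z i, w⟫) l (𝓝 ⟪x, w⟫)

theorem WeakTendsto.map [CompleteSpace E] [CompleteSpace F] {l : Filter ι} {z : ι → E} {x : E}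
    (h : WeakTendsto l z x) (T : E →L[ℝ] F) : WeakTendsto l (fun i => T (z i)) (T x) := by
  intro w
  simp only [← ContinuousLinearMap.adjoint_inner_right]
  exact h _

theorem WeakTendsto.tendsto_inner {l : Filter ι} {z y : ι → E} {x y₀ : E} {M : ℝ}
    (hz : WeakTendsto l z x) (hM : ∀ i, ‖z i‖ ≤ M) (hy : Tendsto y l (𝓝 y₀)) :
    Tendsto (fun i => ⟪z i, y i⟫) l (𝓝 ⟪x, y₀⟫) := by
  have hsmall : Tendsto (fun i => ⟪z i, y i - y₀⟫) l (𝓝 0) := by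
    refine squeeze_zero_norm (fun i => ?_)
      (by simpa using (tendsto_iff_norm_sub_tendsto_zero.1 hy).const_mul M)
    calc ‖⟪z i, y i - y₀⟫‖ ≤ ‖z i‖ * ‖y i - y₀‖ := norm_inner_le_norm _ _
      _ ≤ M * ‖y i - y₀‖ := by gcongr; exact hM i
  simpa [inner_sub_right] using (hz y₀).add hsmall

theorem Ultrafilter.exists_weakTendsto [CompleteSpace E] (G : Ultrafilter ι) {z : ι → E}
    {M : ℝ} (hM : ∀ i, ‖z i‖ ≤ M) : ∃ x, WeakTendsto (G : Filter ι) z x := by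
  have hlim : ∀ w, ∃ L ∈ Metric.closedBall (0 : ℝ) (M * ‖w‖),
      Tendsto (fun i => ⟪z i, w⟫) (G : Filter ι) (𝓝 L) := fun w =>
    (isCompact_closedBall _ _).ultrafilter_le_nhds' (G.map _) <|
      Ultrafilter.mem_map.2 <| univ_mem' fun i => by
        simpa using (abs_real_inner_le_norm (z i) w).trans (by gcongr; exact hM i)
  choose L hLM hL using hlim
  let φ : E →ₗ[ℝ] ℝ := linearMapOfTendsto L (fun i => innerₛₗ ℝ (z i)) (tendsto_pi_nhds.2 hL)
  let φc : StrongDual ℝ E := φ.mkContinuous M fun w => by simpa [φ] using hLM w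
  exact ⟨(InnerProductSpace.toDual ℝ E).symm φc, fun w => by simpa [φc, φ] using hL w⟩

theorem tendsto_of_succ_add_le {a b : ℕ → ℝ} (ha : ∀ n, 0 ≤ a n) (hb : ∀ n, 0 ≤ b n)
    (h : ∀ n, a (n + 1) + b n ≤ a n) :
    (∃ L, Tendsto a atTop (𝓝 L)) ∧ Tendsto b atTop (𝓝 0) := by
  have hanti : Antitone a := antitone_nat_of_succ_le fun n => by linarith [h n, hb n]
  have hconv : Tendsto a atTop (𝓝 (⨅ n, a n)) :=
    tendsto_atTop_ciInf hanti ⟨0, Set.forall_mem_range.2 ha⟩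
  refine ⟨⟨_, hconv⟩, squeeze_zero hb (fun n => ?_ : ∀ n, b n ≤ a n - a (n + 1)) ?_⟩
  · linarith [h n]
  · simpa using hconv.sub (hconv.comp (tendsto_add_atTop_nat 1))

theorem WeakTendsto.eq_of_tendsto_norm_sub_sq {l G G' : Filter ι} [G.NeBot] [G'.NeBot]
    (hG : G ≤ l) (hG' : G' ≤ l) {z : ι → E} {x x' : E}
    (hx : WeakTendsto G z x) (hx' : WeakTendsto G' z x')
    (hL : ∃ L, Tendsto (fun i => ‖z i - x‖ ^ 2) l (𝓝 L))
    (hL' : ∃ L, Tendsto (fun i => ‖z i - x'‖ ^ 2) l (𝓝 L)) : x = x' := by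
  obtain ⟨L, hL⟩ := hL
  obtain ⟨L', hL'⟩ := hL'
  have hpolar : ∀ i,
      ⟪z i, x - x'⟫ = (‖z i - x'‖ ^ 2 - ‖z i - x‖ ^ 2 + ‖x‖ ^ 2 - ‖x'‖ ^ 2) / 2 := by
    intro i
    rw [norm_sub_sq_real, norm_sub_sq_real, inner_sub_right]
    ring
  have hlim : Tendsto (fun i => ⟪z i, x - x'⟫) l
      (𝓝 ((L' - L + ‖x‖ ^ 2 - ‖x'‖ ^ 2) / 2)) := by
    simp_rw [hpolar]
    exact (((hL'.sub hL).add_const _).sub_const _).div_const 2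
  have h : ⟪x, x - x'⟫ = ⟪x', x - x'⟫ :=
    (tendsto_nhds_unique (hx _) (hlim.mono_left hG)).trans
      (tendsto_nhds_unique (hx' _) (hlim.mono_left hG')).symm
  rwa [← sub_eq_zero, ← inner_sub_left, inner_self_eq_zero, sub_eq_zero] at h

/-- Opial's lemma, with limits along ultrafilters in place of weakly convergent subsequences. -/
theorem exists_weakTendsto_of_fejer [CompleteSpace E] {z : ℕ → E} {F : Set E} {M : ℝ}
    (hM : ∀ n, ‖z n‖ ≤ M)
    (hF : ∀ p ∈ F, ∃ L, Tendsto (fun n => ‖z n - p‖ ^ 2) atTop (𝓝 L))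
    (hclus : ∀ G : Ultrafilter ℕ, (G : Filter ℕ) ≤ atTop →
      ∀ x, WeakTendsto (G : Filter ℕ) z x → x ∈ F) :
    ∃ x ∈ F, WeakTendsto atTop z x := by
  have hcl : ∀ G : Ultrafilter ℕ, (G : Filter ℕ) ≤ atTop →
      ∃ x ∈ F, WeakTendsto (G : Filter ℕ) z x :=
    fun G hG => (G.exists_weakTendsto hM).imp fun x hx => ⟨hclus G hG x hx, hx⟩
  obtain ⟨G₀, hG₀⟩ := Ultrafilter.exists_le (atTop : Filter ℕ)
  obtain ⟨x, hxF, hx⟩ := hcl G₀ hG₀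
  refine ⟨x, hxF, fun w => (tendsto_iff_ultrafilter _ _ _).2 fun (G : Ultrafilter ℕ) hG => ?_⟩
  obtain ⟨x', hx'F, hx'⟩ := hcl G hG
  rw [hx.eq_of_tendsto_norm_sub_sq hG₀ hG hx' (hF x hxF) (hF x' hx'F)]
  exact hx' w

theorem ContinuousLinearMap.tendsto_apply_sub_apply (T : E →L[ℝ] F) {l : Filter ι}
    {u v : ι → E} (h : Tendsto (fun i => u i - v i) l (𝓝 0)) :
    Tendsto (fun i => T (u i) - T (v i)) l (𝓝 0) := by
  simpa only [Function.comp_def, map_sub, map_zero] using (T.continuous.tendsto 0).comp h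

end WeakConvergence

theorem Set.mem_add_singleton_iff {G : Type*} [AddGroup G] {s : Set G} {b v : G} :
    v ∈ s + {b} ↔ v - b ∈ s := by
  simp [Set.add_singleton, sub_eq_add_neg]

section MonotoneOperators

variable {E ι : Type*} [NormedAddCommGroup E] [InnerProductSpace ℝ E]

def IsResolvent (S : E → Set E) (J : E → E) : Prop :=
  ∀ w, w - J w ∈ S (J w)

theorem MonotoneSV.smul {A : E → Set E} (hA : MonotoneSV A) {γ : ℝ} (hγ : 0 ≤ γ) :
    MonotoneSV fun x => γ • A x := by
  rintro x y _ _ ⟨u, hu, rfl⟩ ⟨v, hv, rfl⟩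
  rw [← smul_sub, real_inner_smul_right]
  exact mul_nonneg hγ (hA hu hv)

theorem MonotoneSV.add_singleton {S : E → Set E} (hS : MonotoneSV S) {C : E → E}
    (hC : ∀ x y, 0 ≤ ⟪x - y, C x - C y⟫) : MonotoneSV fun x => S x + {C x} := by
  intro x y u v hu hv
  rw [Set.mem_add_singleton_iff] at hu hv
  rw [show u - v = (u - C x - (v - C y)) + (C x - C y) by abel, inner_add_right]
  exact add_nonneg (hS hu hv) (hC x y)

theorem IsResolvent.norm_sub_le {S : E → Set E} {J : E → E} (hJ : IsResolvent S J)
    (hS : MonotoneSV S) (w w' : E) : ‖J w - J w'‖ ≤ ‖w - w'‖ := by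
  have h := hS (hJ w) (hJ w')
  rw [show w - J w - (w' - J w') = (w - w') - (J w - J w') by abel, inner_sub_right,
    real_inner_self_eq_norm_sq, sub_nonneg] at h
  have hcs := real_inner_le_norm (J w - J w') (w - w')
  nlinarith [norm_nonneg (J w - J w'), norm_nonneg (w - w')]

/-- `q` is the fixed point of the contraction `q ↦ J (x - C q)`. -/
theorem IsResolvent.exists_sub_mem_add_singleton [CompleteSpace E] {S : E → Set E}
    {J C : E → E} (hJ : IsResolvent S J) (hS : MonotoneSV S) {β : ℝ} (hβ0 : 0 ≤ β)
    (hβ1 : β < 1) (hC : ∀ x y, ‖C x - C y‖ ≤ β * ‖x - y‖) (x : E) :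
    ∃ q, x - q ∈ S q + {C q} := by
  have hcontr : ContractingWith ⟨β, hβ0⟩ fun q => J (x - C q) := by
    refine ⟨by exact_mod_cast hβ1, LipschitzWith.of_dist_le_mul fun q q' => ?_⟩
    simp only [dist_eq_norm]
    calc ‖J (x - C q) - J (x - C q')‖ ≤ ‖(x - C q) - (x - C q')‖ := hJ.norm_sub_le hS _ _
      _ = ‖C q' - C q‖ := by rw [sub_sub_sub_cancel_left]
      _ ≤ β * ‖q - q'‖ := by rw [norm_sub_rev q]; exact hC q' q
  obtain ⟨q, hq, -⟩ := hcontr.exists_fixedPoint x (edist_ne_top _ _)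
  refine ⟨q, Set.mem_add_singleton_iff.2 ?_⟩
  have h := hJ (x - C q)
  rw [show J (x - C q) = q from hq] at h
  rwa [sub_right_comm]

/-- The easy half of Minty's theorem: if `Id + T` is onto, `T` is maximal. -/
theorem mem_of_forall_inner_nonneg {T : E → Set E} (hT : ∀ x, ∃ q, x - q ∈ T q) {x u : E}
    (h : ∀ q v, v ∈ T q → 0 ≤ ⟪x - q, u - v⟫) : u ∈ T x := by
  obtain ⟨q, hq⟩ := hT (x + u)
  have hxq := h q _ hq
  rw [show u - (x + u - q) = -(x - q) by abel, inner_neg_right, real_inner_self_eq_norm_sq,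
    neg_nonneg] at hxq
  obtain rfl : x = q := sub_eq_zero.1 (norm_eq_zero.1 (by nlinarith [norm_nonneg (x - q)]))
  simpa using hq

theorem MonotoneSV.inner_nonneg_of_weakTendsto {T : E → Set E} (hT : MonotoneSV T)
    {l : Filter ι} [l.NeBot] {z s u : ι → E} {x u₀ : E} {M : ℝ} (hM : ∀ i, ‖z i‖ ≤ M)
    (hz : WeakTendsto l z x) (hzs : Tendsto (fun i => z i - s i) l (𝓝 0))
    (hu : Tendsto u l (𝓝 u₀)) (hsu : ∀ i, u i ∈ T (s i)) {q v : E} (hv : v ∈ T q) :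
    0 ≤ ⟪x - q, u₀ - v⟫ := by
  have hlim : Tendsto (fun i => ⟪z i, u i - v⟫ - ⟪q, u i - v⟫ - ⟪z i - s i, u i - v⟫) l
      (𝓝 (⟪x, u₀ - v⟫ - ⟪q, u₀ - v⟫ - ⟪(0 : E), u₀ - v⟫)) :=
    ((hz.tendsto_inner hM (hu.sub_const v)).sub
      (tendsto_const_nhds.inner (hu.sub_const v))).sub (hzs.inner (hu.sub_const v))
  refine ge_of_tendsto (by simpa [inner_sub_left] using hlim) (Eventually.of_forall fun i => ?_)
  simpa [inner_sub_left] using hT (hsu i) hv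

end MonotoneOperators

section Tseng

variable {E ι : Type*} [NormedAddCommGroup E] {S : E → Set E} {J C : E → E} {β : ℝ}

def tsengOperator (J C : E → E) (x : E) : E :=
  J (x - C x) + (C x - C (J (x - C x)))

theorem sub_tsengOperator_mem (hJ : IsResolvent S J) (x : E) :
    x - tsengOperator J C x ∈ S (J (x - C x)) + {C (J (x - C x))} := by
  rw [Set.mem_add_singleton_iff]
  convert hJ (x - C x) using 1
  simp only [tsengOperator]
  abel

theorem norm_tsengOperator_sub_le (hC : ∀ x y, ‖C x - C y‖ ≤ β * ‖x - y‖) (x : E) :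
    ‖tsengOperator J C x - x‖ ≤ (1 + β) * ‖x - J (x - C x)‖ := by
  calc ‖tsengOperator J C x - x‖ = ‖(C x - C (J (x - C x))) - (x - J (x - C x))‖ := by
        simp only [tsengOperator]; congr 1; abel
    _ ≤ β * ‖x - J (x - C x)‖ + ‖x - J (x - C x)‖ :=
        (norm_sub_le _ _).trans (by gcongr; exact hC _ _)
    _ = (1 + β) * ‖x - J (x - C x)‖ := by ring

theorem tendsto_tsengOperator_sub (hC : ∀ x y, ‖C x - C y‖ ≤ β * ‖x - y‖) {l : Filter ι}
    {z : ι → E} (hres : Tendsto (fun i => z i - J (z i - C (z i))) l (𝓝 0)) :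
    Tendsto (fun i => tsengOperator J C (z i) - z i) l (𝓝 0) :=
  squeeze_zero_norm (fun i => norm_tsengOperator_sub_le hC (z i))
    (by simpa using (tendsto_zero_iff_norm_tendsto_zero.1 hres).const_mul (1 + β))

variable [InnerProductSpace ℝ E]

theorem norm_add_smul_sub_sq_le {lam : ℝ} (hlam0 : 0 < lam) (hlam1 : lam ≤ 1)
    {x d c : E} (hmono : 0 ≤ ⟪x - d, d - c⟫) (hc : ‖c‖ ≤ β * ‖d‖) :
    ‖x + lam • (c - d)‖ ^ 2 ≤ ‖x‖ ^ 2 - lam * (1 - β ^ 2) * ‖d‖ ^ 2 := by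
  have hexp : ‖x + lam • (c - d)‖ ^ 2
      = ‖x‖ ^ 2 + 2 * lam * ⟪x, c - d⟫ + lam ^ 2 * ‖c - d‖ ^ 2 := by
    rw [norm_add_sq_real, real_inner_smul_right, norm_smul, Real.norm_eq_abs, mul_pow, sq_abs]
    ring
  have hcd : ‖c - d‖ ^ 2 = ‖c‖ ^ 2 - 2 * ⟪c, d⟫ + ‖d‖ ^ 2 := norm_sub_sq_real c d
  have hmono' : 0 ≤ ⟪x, d⟫ - ⟪x, c⟫ - ‖d‖ ^ 2 + ⟪c, d⟫ := by
    simp only [inner_sub_left, inner_sub_right, real_inner_self_eq_norm_sq] at hmono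
    linarith [real_inner_comm d c]
  have hc2 : ‖c‖ ^ 2 ≤ β ^ 2 * ‖d‖ ^ 2 := by nlinarith [norm_nonneg c, norm_nonneg d]
  rw [hexp, inner_sub_right]
  nlinarith [mul_nonneg hlam0.le hmono', mul_le_mul_of_nonneg_left hc2 hlam0.le,
    mul_nonneg (mul_nonneg hlam0.le (sub_nonneg.2 hlam1)) (sq_nonneg ‖c - d‖)]

theorem norm_tsengOperator_step_sub_sq_le (hS : MonotoneSV S) (hJ : IsResolvent S J)
    (hCmono : ∀ x y, 0 ≤ ⟪x - y, C x - C y⟫) (hC : ∀ x y, ‖C x - C y‖ ≤ β * ‖x - y‖)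
    {lam : ℝ} (hlam0 : 0 < lam) (hlam1 : lam ≤ 1) {p : E} (hp : 0 ∈ S p + {C p}) (x : E) :
    ‖x + lam • (tsengOperator J C x - x) - p‖ ^ 2
      ≤ ‖x - p‖ ^ 2 - lam * (1 - β ^ 2) * ‖x - J (x - C x)‖ ^ 2 := by
  set s := J (x - C x)
  have hmono := hS.add_singleton hCmono (sub_tsengOperator_mem (C := C) hJ x) hp
  have hstep : tsengOperator J C x - x = (C x - C s) - (x - s) := by
    simp only [tsengOperator, s]; abel
  rw [hstep, add_sub_right_comm]
  refine norm_add_smul_sub_sq_le hlam0 hlam1 ?_ (hC x s)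
  rwa [show x - tsengOperator J C x - 0 = (x - s) - (C x - C s) by
      rw [sub_zero, ← neg_sub, hstep]; abel,
    show s - p = (x - p) - (x - s) by abel] at hmono

variable [CompleteSpace E]

theorem zero_mem_add_singleton_of_weakTendsto (hS : MonotoneSV S) (hJ : IsResolvent S J)
    (hCmono : ∀ x y, 0 ≤ ⟪x - y, C x - C y⟫) (hC : ∀ x y, ‖C x - C y‖ ≤ β * ‖x - y‖)
    (hβ0 : 0 ≤ β) (hβ1 : β < 1) {l : Filter ι} [l.NeBot] {z : ι → E} {x : E} {M : ℝ}
    (hM : ∀ i, ‖z i‖ ≤ M) (hz : WeakTendsto l z x)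
    (hres : Tendsto (fun i => z i - J (z i - C (z i))) l (𝓝 0)) : 0 ∈ S x + {C x} := by
  have hstep : Tendsto (fun i => z i - tsengOperator J C (z i)) l (𝓝 0) := by
    simpa using (tendsto_tsengOperator_sub hC hres).neg
  refine mem_of_forall_inner_nonneg (hJ.exists_sub_mem_add_singleton hS hβ0 hβ1 hC)
    fun q v hv => ?_
  exact (hS.add_singleton hCmono).inner_nonneg_of_weakTendsto hM hz hres hstep
    (fun i => sub_tsengOperator_mem hJ (z i)) hv

theorem exists_weakTendsto_tsengOperator (hS : MonotoneSV S) (hJ : IsResolvent S J)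
    (hCmono : ∀ x y, 0 ≤ ⟪x - y, C x - C y⟫) (hC : ∀ x y, ‖C x - C y‖ ≤ β * ‖x - y‖)
    (hβ0 : 0 ≤ β) (hβ1 : β < 1) {ε : ℝ} (hε : 0 < ε) {lam : ℕ → ℝ}
    (hlam : ∀ n, lam n ∈ Set.Icc ε 1) {z : ℕ → E}
    (hz : ∀ n, z (n + 1) = z n + lam n • (tsengOperator J C (z n) - z n))
    (hzero : ∃ p, 0 ∈ S p + {C p}) :
    ∃ x, 0 ∈ S x + {C x} ∧ WeakTendsto atTop z x ∧
      Tendsto (fun n => z (n + 1) - z n) atTop (𝓝 0) := by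
  set c := ε * (1 - β ^ 2)
  have hc : 0 < c := mul_pos hε (by nlinarith)
  have hfejer : ∀ p, 0 ∈ S p + {C p} → ∀ n,
      ‖z (n + 1) - p‖ ^ 2 + c * ‖z n - J (z n - C (z n))‖ ^ 2 ≤ ‖z n - p‖ ^ 2 := by
    intro p hp n
    have h := norm_tsengOperator_step_sub_sq_le hS hJ hCmono hC (hε.trans_le (hlam n).1)
      (hlam n).2 hp (z n)
    rw [← hz n] at h
    have : c ≤ lam n * (1 - β ^ 2) := mul_le_mul_of_nonneg_right (hlam n).1 (by nlinarith)
    nlinarith [sq_nonneg ‖z n - J (z n - C (z n))‖]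
  have hconv : ∀ p, 0 ∈ S p + {C p} →
      (∃ L, Tendsto (fun n => ‖z n - p‖ ^ 2) atTop (𝓝 L)) ∧
        Tendsto (fun n => c * ‖z n - J (z n - C (z n))‖ ^ 2) atTop (𝓝 0) := fun p hp =>
    tendsto_of_succ_add_le (fun n => by positivity) (fun n => by positivity) (hfejer p hp)
  obtain ⟨p₀, hp₀⟩ := hzero
  have hres : Tendsto (fun n => z n - J (z n - C (z n))) atTop (𝓝 0) := by
    refine tendsto_zero_iff_norm_tendsto_zero.2 ?_
    simpa [inv_mul_cancel_left₀ hc.ne'] using ((hconv p₀ hp₀).2.const_mul c⁻¹).sqrt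
  have hM : ∀ n, ‖z n‖ ≤ ‖p₀‖ + ‖z 0 - p₀‖ := by
    have hanti : Antitone fun n => ‖z n - p₀‖ := antitone_nat_of_succ_le fun n =>
      (sq_le_sq₀ (norm_nonneg _) (norm_nonneg _)).1 (by nlinarith [hfejer p₀ hp₀ n])
    intro n
    linarith [norm_le_norm_add_norm_sub' (z n) p₀, hanti n.zero_le]
  obtain ⟨x, hx, hzx⟩ := exists_weakTendsto_of_fejer hM (fun p hp => (hconv p hp).1)
    fun G hG x hx => zero_mem_add_singleton_of_weakTendsto hS hJ hCmono hC hβ0 hβ1 hM hx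
      (hres.mono_left hG)
  refine ⟨x, hx, hzx, squeeze_zero_norm (fun n => ?_)
    (tendsto_zero_iff_norm_tendsto_zero.1 (tendsto_tsengOperator_sub hC hres))⟩
  rw [hz n, add_sub_cancel_left, norm_smul, Real.norm_of_nonneg (hε.le.trans (hlam n).1)]
  exact mul_le_of_le_one_left (norm_nonneg _) (hlam n).2

end Tseng

section PartialInverse

variable {E : Type*} [NormedAddCommGroup E] [InnerProductSpace ℝ E] (V : Submodule ℝ E)
  [V.HasOrthogonalProjection]

/-- Spingarn's partial inverse `A_V`: its graph is `{(P x + Q u, P u + Q x) | u ∈ A x}` with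
`P`, `Q` the projections onto `V`, `Vᗮ`. -/
def partialInverse (A : E → Set E) : E → Set E := fun x =>
  {u | V.starProjection u + Vᗮ.starProjection x ∈ A (V.starProjection x + Vᗮ.starProjection u)}

theorem inner_eq_inner_starProjection_swap (x u : E) :
    ⟪x, u⟫ = ⟪V.starProjection x + Vᗮ.starProjection u,
      V.starProjection u + Vᗮ.starProjection x⟫ := by
  have horth : ∀ a b : E, ⟪V.starProjection a, Vᗮ.starProjection b⟫ = 0 := fun a b =>
    Submodule.inner_right_of_mem_orthogonal (V.starProjection_apply_mem a)
      (Vᗮ.starProjection_apply_mem b)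
  have horth' : ∀ a b : E, ⟪Vᗮ.starProjection b, V.starProjection a⟫ = 0 := fun a b => by
    rw [real_inner_comm, horth]
  conv_lhs => rw [← V.starProjection_add_starProjection_orthogonal x,
    ← V.starProjection_add_starProjection_orthogonal u]
  simp only [inner_add_left, inner_add_right, horth, horth', add_zero, zero_add]
  rw [real_inner_comm (Vᗮ.starProjection x)]

theorem MonotoneSV.partialInverse {A : E → Set E} (hA : MonotoneSV A) :
    MonotoneSV (partialInverse V A) := by
  intro x y u v hu hv
  rw [inner_eq_inner_starProjection_swap V]
  convert hA hu hv using 2 <;> simp only [map_sub] <;> abel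

theorem IsResolvent.partialInverse {A : E → Set E} {J : E → E} (hJ : IsResolvent A J) :
    IsResolvent (partialInverse V A)
      fun w => V.starProjection (J w) + Vᗮ.starProjection (w - J w) := by
  have hPP : ∀ a, V.starProjection (V.starProjection a) = V.starProjection a := fun a =>
    V.starProjection_eq_self_iff.2 (V.starProjection_apply_mem a)
  intro w
  simp only [_root_.partialInverse, Set.mem_ofPred_eq]
  convert hJ w using 2
  · simp [map_sub, hPP]
  · simp only [map_sub, Submodule.starProjection_orthogonal_val, map_add, hPP, sub_self,
      add_zero]
    abel

theorem neg_mem_partialInverse_iff {A : E → Set E} {c : E} (hc : c ∈ V) (x : E) :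
    -c ∈ partialInverse V A x ↔ Vᗮ.starProjection x - c ∈ A (V.starProjection x) := by
  simp only [_root_.partialInverse, Set.mem_ofPred_eq, map_neg,
    V.starProjection_eq_self_iff.2 hc, Vᗮ.starProjection_apply_eq_zero_iff.2
      (V.le_orthogonal_orthogonal hc), neg_zero, add_zero, neg_add_eq_sub]

theorem zero_mem_partialInverse_smul_add_singleton_iff {A : E → Set E} {B : E → E} {γ : ℝ}
    (hγ : γ ≠ 0) (z : E) :
    0 ∈ partialInverse V (fun x => γ • A x) z + {γ • V.starProjection (B (V.starProjection z))} ↔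
      γ⁻¹ • Vᗮ.starProjection z ∈
        A (V.starProjection z) + {V.starProjection (B (V.starProjection z))} := by
  rw [Set.mem_add_singleton_iff, zero_sub,
    neg_mem_partialInverse_iff V (V.smul_mem γ (V.starProjection_apply_mem _)),
    Set.mem_smul_set_iff_inv_smul_mem₀ hγ, Set.mem_add_singleton_iff, smul_sub,
    inv_smul_smul₀ hγ]

theorem zero_mem_add_normalConeSub_iff {A : E → Set E} {B : E → E} {x : E} :
    0 ∈ A x + {B x} + normalConeSub V x ↔
      x ∈ V ∧ ∃ y ∈ Vᗮ, y ∈ A x + {V.starProjection (B x)} := by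
  constructor
  · rintro ⟨_, ⟨a, ha, _, rfl, rfl⟩, n, ⟨hxV, hn⟩, hsum⟩
    beta_reduce at hsum
    refine ⟨hxV, a + V.starProjection (B x), ?_, Set.add_mem_add ha rfl⟩
    rw [← V.starProjection_apply_eq_zero_iff, map_add,
      V.starProjection_eq_self_iff.2 (V.starProjection_apply_mem _), ← map_add,
      eq_neg_of_add_eq_zero_left hsum, map_neg, V.starProjection_apply_eq_zero_iff.2 hn,
      neg_zero]
  · rintro ⟨hxV, y, hy, hyA⟩
    refine ⟨y - V.starProjection (B x) + B x,
      Set.add_mem_add (Set.mem_add_singleton_iff.1 hyA) rfl, -(y + Vᗮ.starProjection (B x)),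
      ⟨hxV, Vᗮ.neg_mem (Vᗮ.add_mem hy (Vᗮ.starProjection_apply_mem _))⟩, ?_⟩
    beta_reduce
    rw [Submodule.starProjection_orthogonal_val]
    abel

theorem exists_zero_mem_partialInverse_smul_add_singleton {A : E → Set E} {B : E → E} {γ : ℝ}
    (hγ : γ ≠ 0) {x : E} (hx : 0 ∈ A x + {B x} + normalConeSub V x) :
    ∃ z, 0 ∈ partialInverse V (fun x => γ • A x) z
      + {γ • V.starProjection (B (V.starProjection z))} := by
  obtain ⟨hxV, y, hy, hyA⟩ := (zero_mem_add_normalConeSub_iff V).1 hx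
  refine ⟨x + γ • y, (zero_mem_partialInverse_smul_add_singleton_iff V hγ _).2 ?_⟩
  rwa [V.eq_starProjection_of_mem_orthogonal' hxV (Vᗮ.smul_mem γ hy) rfl,
    Vᗮ.eq_starProjection_of_mem_orthogonal' (Vᗮ.smul_mem γ hy) (V.le_orthogonal_orthogonal hxV)
      (add_comm _ _), inv_smul_smul₀ hγ]

theorem inner_sub_smul_starProjection_comp_nonneg {B : E → E}
    (hB : ∀ x y, 0 ≤ ⟪x - y, B x - B y⟫) {γ : ℝ} (hγ : 0 ≤ γ) (x y : E) :
    0 ≤ ⟪x - y, γ • V.starProjection (B (V.starProjection x))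
      - γ • V.starProjection (B (V.starProjection y))⟫ := by
  rw [← smul_sub, real_inner_smul_right, ← map_sub, ← V.inner_starProjection_left_eq_right,
    map_sub]
  exact mul_nonneg hγ (hB _ _)

theorem norm_smul_starProjection_comp_sub_le {B : E → E} {χ : ℝ}
    (hB : ∀ x y, ‖B x - B y‖ ≤ χ * ‖x - y‖) (hχ : 0 ≤ χ) {γ : ℝ} (hγ : 0 ≤ γ) (x y : E) :
    ‖γ • V.starProjection (B (V.starProjection x))
      - γ • V.starProjection (B (V.starProjection y))‖ ≤ γ * χ * ‖x - y‖ := by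
  rw [← smul_sub, norm_smul, Real.norm_of_nonneg hγ, mul_assoc, ← map_sub]
  gcongr
  calc ‖V.starProjection (B (V.starProjection x) - B (V.starProjection y))‖
      ≤ ‖B (V.starProjection x) - B (V.starProjection y)‖ := V.norm_starProjection_apply_le _
    _ ≤ χ * ‖V.starProjection (x - y)‖ := by rw [map_sub]; exact hB _ _
    _ ≤ χ * ‖x - y‖ := by gcongr; exact V.norm_starProjection_apply_le _

end PartialInverse

theorem stmt9 (V : Submodule ℝ H) [CompleteSpace V] (A : H → Set H) (B : H → H)
    (χ : ℝ) (hA : MaxMonotone A)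
    (hBmono : ∀ x y : H, 0 ≤ ⟪x - y, B x - B y⟫)
    (hBlip : ∀ x y : H, ‖B x - B y‖ ≤ χ * ‖x - y‖)
    (hzer : ∃ x : H, (0 : H) ∈ A x + {B x} + normalConeSub V x)
    (γ : ℝ) (hγ : γ ∈ Set.Ioo 0 (1 / χ))
    (ε : ℝ) (hε : ε ∈ Set.Ioo (0 : ℝ) 1)
    (lam : ℕ → ℝ) (hlam : ∀ n, lam n ∈ Set.Icc ε 1)
    (JγA : H → H) (hJ : ∀ w : H, w - JγA w ∈ γ • A (JγA w))
    (z r p s t : ℕ → H)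
    (hr : ∀ n, r n = z n - γ • (V.orthogonalProjectionOnto
        (B (V.orthogonalProjectionOnto (z n) : H)) : H))
    (hp : ∀ n, p n = JγA (r n))
    (hs : ∀ n, s n = (2 : ℝ) • (V.orthogonalProjectionOnto (p n) : H) - p n + r n
        - (V.orthogonalProjectionOnto (r n) : H))
    (ht : ∀ n, t n = s n - γ • (V.orthogonalProjectionOnto
        (B (V.orthogonalProjectionOnto (s n) : H)) : H))
    (hz : ∀ n, z (n + 1) = z n + lam n • (t n - r n)) :
    ∃ xbar ybar : H,
      (0 : H) ∈ A xbar + {B xbar} + normalConeSub V xbar ∧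
      ybar ∈ Vᗮ ∧ ybar ∈ A xbar + {(V.orthogonalProjectionOnto (B xbar) : H)} ∧
      (∀ w : H, Tendsto (fun n => ⟪(V.orthogonalProjectionOnto (z n) : H), w⟫)
        atTop (𝓝 ⟪xbar, w⟫)) ∧
      (∀ w : H, Tendsto (fun n => ⟪γ⁻¹ • (Vᗮ.orthogonalProjectionOnto (z n) : H), w⟫)
        atTop (𝓝 ⟪ybar, w⟫)) ∧
      Tendsto (fun n => (V.orthogonalProjectionOnto (z (n + 1)) : H)
        - (V.orthogonalProjectionOnto (z n) : H)) atTop (𝓝 0) ∧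
      Tendsto (fun n => γ⁻¹ • (Vᗮ.orthogonalProjectionOnto (z (n + 1)) : H)
        - γ⁻¹ • (Vᗮ.orthogonalProjectionOnto (z n) : H)) atTop (𝓝 0) := by
  obtain ⟨hγ0, hγχ⟩ := hγ
  have hχ : 0 < χ := one_div_pos.1 (hγ0.trans hγχ)
  simp only [Submodule.coe_orthogonalProjectionOnto_apply] at hr hs ht ⊢
  have hrec : ∀ n, z (n + 1) = z n + lam n • (tsengOperator
      (fun w => V.starProjection (JγA w) + Vᗮ.starProjection (w - JγA w))
      (fun x => γ • V.starProjection (B (V.starProjection x))) (z n) - z n) := by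
    intro n
    have hsJ : s n = V.starProjection (JγA (r n)) + Vᗮ.starProjection (r n - JγA (r n)) := by
      rw [hs n, hp n, Submodule.starProjection_orthogonal_val, map_sub]
      module
    rw [hz n, ht n, hsJ, hr n]
    simp only [tsengOperator]
    module
  obtain ⟨x₀, hx₀⟩ := hzer
  obtain ⟨zb, hzb, hweak, hstep⟩ := exists_weakTendsto_tsengOperator
    ((hA.1.smul hγ0.le).partialInverse V) (IsResolvent.partialInverse V hJ)
    (inner_sub_smul_starProjection_comp_nonneg V hBmono hγ0.le)
    (norm_smul_starProjection_comp_sub_le V hBlip hχ.le hγ0.le) (by positivity)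
    (by rwa [lt_div_iff₀ hχ] at hγχ) hε.1 hlam hrec
    (exists_zero_mem_partialInverse_smul_add_singleton V hγ0.ne' hx₀)
  rw [zero_mem_partialInverse_smul_add_singleton_iff V hγ0.ne'] at hzb
  refine ⟨V.starProjection zb, γ⁻¹ • Vᗮ.starProjection zb,
    (zero_mem_add_normalConeSub_iff V).2 ⟨V.starProjection_apply_mem zb, _,
      Vᗮ.smul_mem _ (Vᗮ.starProjection_apply_mem zb), hzb⟩,
    Vᗮ.smul_mem _ (Vᗮ.starProjection_apply_mem zb), hzb, hweak.map V.starProjection,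
    hweak.map (γ⁻¹ • Vᗮ.starProjection), V.starProjection.tendsto_apply_sub_apply hstep,
    (γ⁻¹ • Vᗮ.starProjection).tendsto_apply_sub_apply hstep⟩
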